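/- Let G be a digraph, k ≥ 1 a natural number, and s, t vertices with d := dist_G(s,t) < ∞. Suppose that no simple s-to-t path in G has length ℓ with d + k ≤ ℓ ≤ d + 3k − 1, and that there exists a simple s-to-t path of length at least d + k. Then there exist a natural number p, distinct vertices x ≠ y with dist_G(s,x) = dist_G(s,y) = p, and paths P_start, P_mid, P_end such that: (a) P_start is a shortest s-to-x path in G; (b) P_mid is an x-to-y path of length at least 2k contained in the induced subgraph G_{≥p} on {v : dist_G(s,v) ≥ p}; (c) P_end is a y-to-t path contained in G_{≥p}; and (d) P_mid and P_end are internally vertex-disjoint. -/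

import Mathlib

variable {V : Type*}

/-- `w` is a directed walk from `u` to `v` in the digraph with arc relation `A`:
a nonempty list of vertices whose consecutive members are joined by arcs,
starting at `u` and ending at `v`. -/
def IsDiWalk (A : V → V → Prop) (u v : V) (w : List V) : Prop :=
  w.Chain' A ∧ w.head? = some u ∧ w.getLast? = some v

/-- The length (number of arcs) of a walk represented as its list of vertices. -/
def walkLength (w : List V) : ℕ :=
  w.length - 1

/-- `w` is a simple directed path from `u` to `v`. -/
def IsDiPath (A : V → V → Prop) (u v : V) (w : List V) : Prop :=
  IsDiWalk A u v w ∧ w.Nodup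

/-- Directed distance from `u` to `v`: the minimum length of a directed
`u`-to-`v` walk, or `⊤` if `v` is unreachable from `u`. -/
noncomputable def ddist (A : V → V → Prop) (u v : V) : ℕ∞ :=
  ⨅ (w : List V) (_ : IsDiWalk A u v w), (walkLength w : ℕ∞)

/-- The internal (non-endpoint) vertices of a path represented as a list. -/
def internalVerts (w : List V) : List V :=
  w.tail.dropLast

/-- Two paths are internally vertex-disjoint if no internal vertex of either
lies on the other. -/
def InternallyDisjoint (w₁ w₂ : List V) : Prop :=
  (∀ a ∈ internalVerts w₁, a ∉ w₂) ∧ (∀ a ∈ internalVerts w₂, a ∉ w₁)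

/-- All vertices of `w` lie in the induced subgraph `G_{≥p}` (with respect to
source `s`), i.e. have distance at least `p` from `s`. A path satisfying
`IsDiPath A x y w` together with `InGeq A s p w` is exactly a path of the
induced subgraph of `G` on `{v : dist_G(s,v) ≥ p}`. -/
def InGeq (A : V → V → Prop) (s : V) (p : ℕ) (w : List V) : Prop :=
  ∀ a ∈ w, (p : ℕ∞) ≤ ddist A s a

/-!
Let `P = v₀ … v_m` be a simple `s`-`t` path of length `m ≥ d + k` and `f i = dist(s, vᵢ)`, so
that `f 0 = 0`, `f m = d` and `f (i + 1) ≤ f i + 1`. If `i` is a suffix minimum of `f`, a shortest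
path to `vᵢ` followed by `vᵢ … v_m` is again a simple `s`-`t` path, of length `f i + (m - i)`.
These shortcut lengths run from `m ≥ d + 3k` down to `d`, so the gap makes them jump over
`[d + k, d + 3k - 1]` between two consecutive suffix minima `a < b`. Such a jump forces
`f a = f b =: p` and `b - a > 2k`, while `v_a, …, v_m` all lie in `G_{≥p}`: take for `P_start` a
shortest path to `v_a`, and `P_mid = v_a … v_b`, `P_end = v_b … v_m`.
-/

section Walks

variable {A : V → V → Prop} {u v x : V} {w w₁ w₂ : List V}

lemma IsDiWalk.ne_nil (h : IsDiWalk A u v w) : w ≠ [] := by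
  rintro rfl
  simp [IsDiWalk] at h

lemma IsDiWalk.length_pos (h : IsDiWalk A u v w) : 0 < w.length :=
  List.length_pos_iff.mpr h.ne_nil

lemma IsDiWalk.walkLength_lt_length (h : IsDiWalk A u v w) : walkLength w < w.length := by
  have := h.length_pos
  unfold walkLength
  omega

lemma IsDiWalk.getElem_zero (h : IsDiWalk A u v w) : w[0]'h.length_pos = u := by
  have hu := h.2.1
  rwa [List.head?_eq_getElem?, List.getElem?_eq_getElem h.length_pos, Option.some_inj] at hu

lemma IsDiWalk.getElem_walkLength (h : IsDiWalk A u v w) :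
    w[walkLength w]'h.walkLength_lt_length = v := by
  have hv := h.2.2
  rwa [List.getLast?_eq_getElem?, ← walkLength, List.getElem?_eq_getElem h.walkLength_lt_length,
    Option.some_inj] at hv

lemma IsDiWalk.take (h : IsDiWalk A u v w) {i : ℕ} (hi : i < w.length) :
    IsDiWalk A u w[i] (w.take (i + 1)) := by
  refine ⟨h.1.take _, by simp [List.head?_take, h.2.1], ?_⟩
  rw [List.getLast?_eq_getElem?, List.length_take, Nat.min_eq_left hi, Nat.succ_sub_one,
    List.getElem?_take_of_lt (Nat.lt_succ_self i), List.getElem?_eq_getElem hi]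

lemma walkLength_take {i : ℕ} (hi : i < w.length) : walkLength (w.take (i + 1)) = i := by
  simp only [walkLength, List.length_take]
  omega

lemma IsDiWalk.drop (h : IsDiWalk A u v w) {i : ℕ} (hi : i < w.length) :
    IsDiWalk A w[i] v (w.drop i) := by
  refine ⟨h.1.drop _, by rw [List.head?_drop, List.getElem?_eq_getElem hi], ?_⟩
  rw [List.getLast?_drop, if_neg (by omega)]
  exact h.2.2

lemma walkLength_drop (i : ℕ) : walkLength (w.drop i) = walkLength w - i := by
  simp only [walkLength, List.length_drop]
  omega

lemma IsDiWalk.append (h₁ : IsDiWalk A u v w₁) (h₂ : IsDiWalk A v x w₂) :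
    IsDiWalk A u x (w₁ ++ w₂.tail) := by
  obtain ⟨l₁, rfl⟩ := List.getLast?_eq_some_iff.mp h₁.2.2
  obtain ⟨l₂, rfl⟩ := List.head?_eq_some_iff.mp h₂.2.1
  refine ⟨?_, ?_, ?_⟩
  · exact List.IsChain.append_overlap h₁.1 h₂.1 (List.cons_ne_nil v [])
  · simpa using h₁.2.1
  · simpa using h₂.2.2

lemma walkLength_append (h₁ : IsDiWalk A u v w₁) (h₂ : IsDiWalk A v x w₂) :
    walkLength (w₁ ++ w₂.tail) = walkLength w₁ + walkLength w₂ := by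
  have := h₁.length_pos
  have := h₂.length_pos
  simp only [walkLength, List.length_append, List.length_tail]
  omega

end Walks

section Distance

variable {A : V → V → Prop} {s u v x : V} {w : List V}

lemma ddist_le_walkLength (h : IsDiWalk A u v w) : ddist A u v ≤ walkLength w :=
  iInf₂_le w h

lemma exists_walk_walkLength_eq_ddist (h : ddist A u v ≠ ⊤) :
    ∃ w, IsDiWalk A u v w ∧ (walkLength w : ℕ∞) = ddist A u v := by
  rw [ddist, iInf_subtype'] at h ⊢
  have : Nonempty {w // IsDiWalk A u v w} := by
    by_contra hempty
    rw [not_nonempty_iff] at hempty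
    exact h (iInf_of_empty _)
  obtain ⟨⟨w, hw⟩, hmin⟩ := ENat.exists_eq_iInf fun w : {w // IsDiWalk A u v w} ↦
    (walkLength w.1 : ℕ∞)
  exact ⟨w, hw, hmin⟩

lemma ddist_self : ddist A s s = 0 :=
  nonpos_iff_eq_zero.mp (ddist_le_walkLength (w := [s]) ⟨List.IsChain.singleton s, rfl, rfl⟩)

lemma ddist_le_ddist_add_walkLength (h : IsDiWalk A u v w) :
    ddist A s v ≤ ddist A s u + walkLength w := by
  rcases eq_or_ne (ddist A s u) ⊤ with htop | htop
  · simp [htop]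
  obtain ⟨w₀, hw₀, hlen⟩ := exists_walk_walkLength_eq_ddist htop
  calc ddist A s v ≤ walkLength (w₀ ++ w.tail) := ddist_le_walkLength (hw₀.append h)
    _ = ddist A s u + walkLength w := by
      rw [walkLength_append hw₀ h, Nat.cast_add, hlen]

lemma IsDiWalk.ddist_getElem_le (h : IsDiWalk A s v w) {i : ℕ} (hi : i < w.length) :
    ddist A s w[i] ≤ i := by
  simpa only [walkLength_take hi] using ddist_le_walkLength (h.take hi)

lemma IsDiWalk.ddist_getElem_of_shortest (h : IsDiWalk A s x w)
    (hw : (walkLength w : ℕ∞) = ddist A s x) {i : ℕ} (hi : i < w.length) :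
    ddist A s w[i] = i := by
  refine le_antisymm (h.ddist_getElem_le hi) (not_lt.mp fun hlt ↦ ?_)
  have hrest := ddist_le_ddist_add_walkLength (s := s) (h.drop hi)
  rw [← hw, walkLength_drop] at hrest
  have hsplit : (walkLength w : ℕ∞) = i + (walkLength w - i : ℕ) := by
    norm_cast
    unfold walkLength
    omega
  rw [hsplit] at hrest
  exact (WithTop.add_lt_add_right (ENat.natCast_ne_top _) hlt).not_ge hrest

lemma IsDiWalk.nodup_of_shortest (h : IsDiWalk A s x w)
    (hw : (walkLength w : ℕ∞) = ddist A s x) : w.Nodup := by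
  refine List.nodup_iff_injective_get.mpr fun i j hij ↦ Fin.ext ?_
  have := h.ddist_getElem_of_shortest hw j.isLt
  rw [← List.get_eq_getElem, ← hij, List.get_eq_getElem,
    h.ddist_getElem_of_shortest hw i.isLt] at this
  exact_mod_cast this

end Distance

section Paths

variable {A : V → V → Prop} {s t u v x : V} {w : List V}

lemma IsDiPath.take (h : IsDiPath A u v w) {i : ℕ} (hi : i < w.length) :
    IsDiPath A u w[i] (w.take (i + 1)) :=
  ⟨h.1.take hi, h.2.sublist (List.take_sublist _ _)⟩

lemma IsDiPath.drop (h : IsDiPath A u v w) {i : ℕ} (hi : i < w.length) :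
    IsDiPath A w[i] v (w.drop i) :=
  ⟨h.1.drop hi, h.2.sublist (List.drop_sublist _ _)⟩

lemma internallyDisjoint_take_drop (hw : w.Nodup) (i : ℕ) :
    InternallyDisjoint (w.take (i + 1)) (w.drop i) := by
  constructor
  · intro a ha hdrop
    have hmem : a ∈ w.take i := by
      rw [internalVerts, ← List.tail_dropLast, List.dropLast_take_eq_take_dropLast] at ha
      exact ((List.dropLast_prefix w).take i).subset (List.mem_of_mem_tail ha)
    exact List.disjoint_of_nodup_append (by rwa [List.take_append_drop]) hmem hdrop
  · intro a ha htake
    have hmem : a ∈ w.drop (i + 1) := by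
      rw [← List.tail_drop]
      exact (List.dropLast_sublist _).subset ha
    exact List.disjoint_of_nodup_append (by rwa [List.take_append_drop]) htake hmem

/-- A vertex common to both pieces is at distance `≤ dist(s, x)` on the shortest one, hence is `x`,
which is not on `Q.tail`. -/
lemma isDiPath_append_of_shortest {SP Q : List V} (hSP : IsDiWalk A s x SP)
    (hlen : (walkLength SP : ℕ∞) = ddist A s x) (hQ : IsDiPath A x t Q)
    (hge : InGeq A s (walkLength SP) Q) : IsDiPath A s t (SP ++ Q.tail) := by
  obtain ⟨l, rfl⟩ := List.head?_eq_some_iff.mp hQ.1.2.1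
  refine ⟨hSP.append hQ.1, List.nodup_append.mpr ⟨hSP.nodup_of_shortest hlen,
    (List.nodup_cons.mp hQ.2).2, ?_⟩⟩
  rintro z hz _ hzl rfl
  obtain ⟨i, hi, rfl⟩ := List.getElem_of_mem hz
  have hdist := hge _ (List.mem_cons_of_mem x hzl)
  rw [hSP.ddist_getElem_of_shortest hlen hi, Nat.cast_le] at hdist
  have hlast : i = walkLength SP := le_antisymm (Nat.le_sub_one_of_lt hi) hdist
  subst hlast
  rw [hSP.getElem_walkLength] at hzl
  exact (List.nodup_cons.mp hQ.2).1 hzl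

end Paths

def IsSuffixMin (f : ℕ → ℕ) (m i : ℕ) : Prop :=
  i ≤ m ∧ ∀ j, i ≤ j → j ≤ m → f i ≤ f j

lemma exists_isSuffixMin_le (f : ℕ → ℕ) {m j : ℕ} (hj : j ≤ m) :
    ∃ c, j ≤ c ∧ IsSuffixMin f m c ∧ f c ≤ f j := by
  obtain ⟨c, hc, hmin⟩ := (Finset.Icc j m).exists_min_image f
    ⟨j, Finset.mem_Icc.mpr ⟨le_rfl, hj⟩⟩
  rw [Finset.mem_Icc] at hc
  exact ⟨c, hc.1, ⟨hc.2, fun i hci him ↦ hmin i (Finset.mem_Icc.mpr ⟨hc.1.trans hci, him⟩)⟩,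
    hmin j (Finset.mem_Icc.mpr ⟨le_rfl, hj⟩)⟩

theorem exists_plateau_of_shortcut_gap (f : ℕ → ℕ) {m d k : ℕ} (hk : 1 ≤ k) (h0 : f 0 = 0)
    (hm : f m = d) (hstep : ∀ i < m, f (i + 1) ≤ f i + 1)
    (hgap : ∀ i, IsSuffixMin f m i → ¬ (d + k ≤ f i + (m - i) ∧ f i + (m - i) ≤ d + 3 * k - 1))
    (hlong : d + k ≤ m) :
    ∃ a b, a < b ∧ b ≤ m ∧ 2 * k ≤ b - a ∧ f a = f b ∧ ∀ j, a ≤ j → j ≤ m → f b ≤ f j := by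
  classical
  have hmin₀ : IsSuffixMin f m 0 := ⟨Nat.zero_le m, fun j _ _ ↦ by simp [h0]⟩
  have hlong' : d + 3 * k ≤ m := by
    have := hgap 0 hmin₀
    rw [h0] at this
    omega
  let LongShortcut i := IsSuffixMin f m i ∧ d + 3 * k ≤ f i + (m - i)
  set a := Nat.findGreatest LongShortcut m
  have ha : LongShortcut a :=
    Nat.findGreatest_spec (Nat.zero_le m) ⟨hmin₀, by rwa [h0, Nat.zero_add]⟩
  have ha_max : ∀ j, a < j → j ≤ m → ¬ LongShortcut j := fun _ ↦ Nat.findGreatest_is_greatest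
  have ham : a < m := by
    refine lt_of_le_of_ne ha.1.1 fun hma ↦ ?_
    have := ha.2
    rw [hma, hm] at this
    omega
  have hex : ∃ j, IsSuffixMin f m j ∧ a < j :=
    ⟨m, ⟨le_rfl, fun j h₁ h₂ ↦ by rw [le_antisymm h₂ h₁]⟩, ham⟩
  obtain ⟨hb, hab⟩ := Nat.find_spec hex
  set b := Nat.find hex
  have hb_le : ∀ j, a < j → j ≤ m → f b ≤ f j := by
    intro j hj hjm
    obtain ⟨c, hjc, hc, hcj⟩ := exists_isSuffixMin_le f hjm
    exact (hb.2 c (Nat.find_min' hex ⟨hc, by omega⟩) hc.1).trans hcj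
  -- if `f a < f b`, the step bound makes `a + 1` a suffix minimum with a longer shortcut than `a`
  have hfab : f a = f b := by
    refine le_antisymm (ha.1.2 b hab.le hb.1) (not_lt.mp fun hlt ↦ ?_)
    have hsucc : f (a + 1) = f b :=
      le_antisymm (by have := hstep a ham; omega) (hb_le _ (by omega) (by omega))
    refine ha_max (a + 1) (by omega) (by omega) ⟨⟨by omega, fun j hj hjm ↦ ?_⟩, ?_⟩
    · exact hsucc ▸ hb_le j (by omega) hjm
    · have := ha.2
      omega
  have hb_short : f b + (m - b) < d + k := by
    by_contra hlong_b
    exact ha_max b hab hb.1 ⟨hb, by have := hgap b hb; omega⟩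
  refine ⟨a, b, hab, hb.1, ?_, hfab, fun j hj hjm ↦ ?_⟩
  · have := ha.2
    omega
  · rcases hj.eq_or_lt with rfl | hj
    · exact hfab.ge
    · exact hb_le j hj hjm

noncomputable def distProfile (A : V → V → Prop) (s : V) (w : List V) (i : ℕ) : ℕ :=
  (ddist A s (w.getD i s)).toNat

section Profile

variable {A : V → V → Prop} {s t v : V} {w : List V}

lemma IsDiWalk.ddist_getElem_eq_distProfile (h : IsDiWalk A s v w) {i : ℕ} (hi : i < w.length) :
    ddist A s w[i] = distProfile A s w i := by
  rw [distProfile, List.getD_eq_getElem _ _ hi, ENat.natCast_toNat]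
  exact ((h.ddist_getElem_le hi).trans_lt (ENat.natCast_lt_top i)).ne

lemma IsDiWalk.distProfile_zero (h : IsDiWalk A s v w) : distProfile A s w 0 = 0 := by
  rw [distProfile, List.getD_eq_getElem _ _ h.length_pos, h.getElem_zero, ddist_self,
    ENat.toNat_zero]

lemma IsDiWalk.distProfile_walkLength (h : IsDiWalk A s v w) :
    distProfile A s w (walkLength w) = (ddist A s v).toNat := by
  rw [distProfile, List.getD_eq_getElem _ _ h.walkLength_lt_length, h.getElem_walkLength]

lemma IsDiWalk.distProfile_succ_le (h : IsDiWalk A s v w) {i : ℕ} (hi : i < walkLength w) :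
    distProfile A s w (i + 1) ≤ distProfile A s w i + 1 := by
  have hi' : i + 1 < w.length := by
    unfold walkLength at hi
    omega
  have harc : IsDiWalk A w[i] w[i + 1] [w[i], w[i + 1]] :=
    ⟨List.isChain_pair.mpr (List.isChain_iff_getElem.mp h.1 i hi'), rfl, rfl⟩
  have := ddist_le_ddist_add_walkLength (s := s) harc
  rw [h.ddist_getElem_eq_distProfile hi', h.ddist_getElem_eq_distProfile (by omega)] at this
  exact_mod_cast this

lemma IsDiWalk.inGeq_drop (h : IsDiWalk A s v w) {p i : ℕ}
    (hp : ∀ j, i ≤ j → j ≤ walkLength w → p ≤ distProfile A s w j) : InGeq A s p (w.drop i) := by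
  intro z hz
  obtain ⟨j, hj, rfl⟩ := List.mem_drop_iff_getElem.mp hz
  rw [h.ddist_getElem_eq_distProfile (by omega : i + j < w.length), Nat.cast_le]
  exact hp (i + j) (Nat.le_add_right i j) (Nat.le_sub_one_of_lt (by omega))

lemma IsDiPath.exists_shortcut_of_isSuffixMin (h : IsDiPath A s t w) {i : ℕ}
    (hi : IsSuffixMin (distProfile A s w) (walkLength w) i) :
    ∃ Q, IsDiPath A s t Q ∧ walkLength Q = distProfile A s w i + (walkLength w - i) := by
  have hi' : i < w.length := lt_of_le_of_lt hi.1 h.1.walkLength_lt_length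
  have hdist := h.1.ddist_getElem_eq_distProfile hi'
  obtain ⟨SP, hSP, hlen⟩ := exists_walk_walkLength_eq_ddist (hdist ▸ ENat.natCast_ne_top _)
  have hSPlen : walkLength SP = distProfile A s w i := by exact_mod_cast hlen.trans hdist
  refine ⟨SP ++ (w.drop i).tail, isDiPath_append_of_shortest hSP hlen (h.drop hi') ?_, ?_⟩
  · rw [hSPlen]
    exact h.1.inGeq_drop hi.2
  · rw [walkLength_append hSP (h.1.drop hi'), hSPlen, walkLength_drop]

end Profile

/-- if no simple `s`-to-`t` path has length `ℓ` with
`d + k ≤ ℓ ≤ d + 3k − 1` (`d = dist_G(s,t) < ∞`, `k ≥ 1`), but some simple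
`s`-to-`t` path has length at least `d + k`, then there exist `p`, `x ≠ y` in
layer `p`, and paths `P_start`, `P_mid`, `P_end` satisfying properties (a)–(d). -/
theorem stmt12 (A : V → V → Prop) (k : ℕ) (hk : 1 ≤ k)
    (s t : V) (d : ℕ) (hd : ddist A s t = (d : ℕ∞))
    (hgap : ∀ Q : List V, IsDiPath A s t Q →
      ¬ (d + k ≤ walkLength Q ∧ walkLength Q ≤ d + 3 * k - 1))
    (hex : ∃ P : List V, IsDiPath A s t P ∧ d + k ≤ walkLength P) :
    ∃ (p : ℕ) (x y : V), x ≠ y ∧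
      ddist A s x = (p : ℕ∞) ∧ ddist A s y = (p : ℕ∞) ∧
      ∃ Pstart Pmid Pend : List V,
        IsDiPath A s x Pstart ∧ (walkLength Pstart : ℕ∞) = ddist A s x ∧
        IsDiPath A x y Pmid ∧ 2 * k ≤ walkLength Pmid ∧ InGeq A s p Pmid ∧
        IsDiPath A y t Pend ∧ InGeq A s p Pend ∧
        InternallyDisjoint Pmid Pend := by
  obtain ⟨P, hP, hPlen⟩ := hex
  obtain ⟨a, b, hab, hbm, hk2, hfab, hmin⟩ :=
    exists_plateau_of_shortcut_gap (distProfile A s P) hk hP.1.distProfile_zero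
      (by rw [hP.1.distProfile_walkLength, hd, ENat.toNat_natCast])
      (fun _ hi ↦ hP.1.distProfile_succ_le hi)
      (fun _ hi ↦ by
        obtain ⟨Q, hQ, hQlen⟩ := hP.exists_shortcut_of_isSuffixMin hi
        exact hQlen ▸ hgap Q hQ)
      hPlen
  have hb : b < P.length := hbm.trans_lt hP.1.walkLength_lt_length
  have ha : a < P.length := hab.trans hb
  have hx := hP.1.ddist_getElem_eq_distProfile ha
  obtain ⟨Pstart, hstart, hstart_len⟩ :=
    exists_walk_walkLength_eq_ddist (hx ▸ ENat.natCast_ne_top _)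
  have hrest := hP.drop ha
  have hrest_geq := hP.1.inGeq_drop hmin
  have hba : b - a < (P.drop a).length := by
    rw [List.length_drop]
    omega
  have hy : (P.drop a)[b - a] = P[b] := by
    simp only [List.getElem_drop, Nat.add_sub_cancel' hab.le]
  refine ⟨_, P[a], P[b], fun h ↦ hab.ne (hP.2.getElem_inj_iff.mp h), hfab ▸ hx,
    hP.1.ddist_getElem_eq_distProfile hb, Pstart, (P.drop a).take (b - a + 1),
    (P.drop a).drop (b - a), ⟨hstart, hstart.nodup_of_shortest hstart_len⟩, hstart_len,
    hy ▸ hrest.take hba, by rwa [walkLength_take hba],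
    fun z hz ↦ hrest_geq z ((List.take_sublist _ _).subset hz), hy ▸ hrest.drop hba,
    fun z hz ↦ hrest_geq z ((List.drop_sublist _ _).subset hz),
    internallyDisjoint_take_drop hrest.2 _⟩
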